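/- arXiv:2205.07694 — 2 statements merged into one kernel-verified Lean document; each statement's English description precedes it below -/
import Mathlib

section
/- Let (X, Σ, μ) be a measure space with μ(X) < ∞. Let gₙ, g : X → ℝ be integrable functions with gₙ → g in L¹(μ) (i.e. ∫ |gₙ − g| dμ → 0). Let fₙ : X → ℝ be integrable functions with fₙ ≤ gₙ μ-almost everywhere for every n, and suppose fₙ → f pointwise μ-almost everywhere, where f : X → ℝ is measurable, the positive part f⁺ := max(f,0) is integrable, but the lower Lebesgue integral of the negative part is infinite, ∫⁻ f⁻ dμ = ∞. Then ∫ fₙ dμ tends to −∞ (i.e. the sequence of integrals tends to the bottom filter atBot). (This is the non-integrable case of the paper's version of the reverse Fatou lemma, Lemma 4.3.) -/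
open MeasureTheory Filter Topology

/-!
Write `hₙ = gₙ - fₙ ≥ 0`, so that `∫ fₙ = ∫ gₙ - ∫ hₙ` with `∫ gₙ → ∫ g`; it suffices that
`∫ hₙ → ∞`. Since `f⁻ ≤ (g - f)⁺ + g⁻` and `g` is integrable, `∫⁻ (g - f)⁺ = ∞`. If `∫ hₙ` stayed
bounded along a subsequence, a further subsequence would have `gₙ → g` a.e. (`L¹` convergence
implies convergence in measure), hence `hₙ → g - f` a.e., and Fatou's lemma would bound
`∫⁻ (g - f)⁺` by the same constant.
-/

namespace MeasureTheory

variable {X : Type*} [MeasurableSpace X] {μ : Measure X}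

theorem lintegral_ofReal_sub_eq_top {f g : X → ℝ} (hg : Integrable g μ)
    (hf : ∫⁻ x, ENNReal.ofReal (-f x) ∂μ = ⊤) :
    ∫⁻ x, ENNReal.ofReal (g x - f x) ∂μ = ⊤ := by
  have hle : ∫⁻ x, ENNReal.ofReal (-f x) ∂μ ≤
      ∫⁻ x, ENNReal.ofReal (g x - f x) ∂μ + ∫⁻ x, ENNReal.ofReal (-g x) ∂μ :=
    calc ∫⁻ x, ENNReal.ofReal (-f x) ∂μ
        ≤ ∫⁻ x, (ENNReal.ofReal (g x - f x) + ENNReal.ofReal (-g x)) ∂μ :=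
          lintegral_mono fun x => by
            rw [show -f x = (g x - f x) + -g x by ring]
            exact ENNReal.ofReal_add_le
      _ = _ := lintegral_add_right' _ hg.neg.aemeasurable.ennreal_ofReal
  rw [hf, top_le_iff, ENNReal.add_eq_top] at hle
  exact hle.resolve_right hg.neg.lintegral_lt_top.ne

theorem tendsto_eLpNorm_one_sub_of_tendsto_integral_abs_sub {G : ℕ → X → ℝ} {g : X → ℝ}
    (hG : ∀ n, Integrable (G n) μ) (hg : Integrable g μ)
    (h : Tendsto (fun n => ∫ x, |G n x - g x| ∂μ) atTop (𝓝 0)) :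
    Tendsto (fun n => eLpNorm (G n - g) 1 μ) atTop (𝓝 0) := by
  have heq : ∀ n, eLpNorm (G n - g) 1 μ = ENNReal.ofReal (∫ x, |G n x - g x| ∂μ) := fun n => by
    rw [eLpNorm_one_eq_lintegral_enorm, ← ofReal_integral_norm_eq_lintegral_enorm ((hG n).sub hg)]
    simp only [Pi.sub_apply, Real.norm_eq_abs]
  simpa only [heq, ENNReal.ofReal_zero, Function.comp_def] using
    (ENNReal.continuous_ofReal.tendsto 0).comp h

theorem lintegral_ofReal_le_liminf_of_tendsto_ae {ι : Type*} {u : Filter ι}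
    [u.NeBot] [IsCountablyGenerated u] {F : ι → X → ℝ} {H : X → ℝ} (hF : ∀ i, AEMeasurable (F i) μ)
    (hlim : ∀ᵐ x ∂μ, Tendsto (fun i => F i x) u (𝓝 (H x))) :
    ∫⁻ x, ENNReal.ofReal (H x) ∂μ ≤ liminf (fun i => ∫⁻ x, ENNReal.ofReal (F i x) ∂μ) u := by
  calc ∫⁻ x, ENNReal.ofReal (H x) ∂μ
      = ∫⁻ x, liminf (fun i => ENNReal.ofReal (F i x)) u ∂μ := by
        refine lintegral_congr_ae ?_
        filter_upwards [hlim] with x hx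
        exact ((ENNReal.continuous_ofReal.tendsto _).comp hx).liminf_eq.symm
    _ ≤ _ := lintegral_liminf_le' fun i => (hF i).ennreal_ofReal

theorem tendsto_integral_atTop_of_subseq_tendsto_ae {F : ℕ → X → ℝ} {H : X → ℝ}
    (hF_int : ∀ n, Integrable (F n) μ) (hF_nonneg : ∀ n, 0 ≤ᵐ[μ] F n)
    (hH : ∫⁻ x, ENNReal.ofReal (H x) ∂μ = ⊤)
    (hsubseq : ∀ φ : ℕ → ℕ, StrictMono φ → ∃ ψ : ℕ → ℕ, StrictMono ψ ∧
      ∀ᵐ x ∂μ, Tendsto (fun k => F (φ (ψ k)) x) atTop (𝓝 (H x))) :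
    Tendsto (fun n => ∫ x, F n x ∂μ) atTop atTop := by
  refine tendsto_atTop.mpr fun M => ?_
  by_contra! hM
  obtain ⟨φ, hφ, hφM⟩ := extraction_of_frequently_atTop hM
  obtain ⟨ψ, hψ, hlim⟩ := hsubseq φ hφ
  have hbound : ∀ k, ∫⁻ x, ENNReal.ofReal (F (φ (ψ k)) x) ∂μ ≤ ENNReal.ofReal M := fun k => by
    rw [← ofReal_integral_eq_lintegral_ofReal (hF_int _) (hF_nonneg _)]
    exact ENNReal.ofReal_le_ofReal (hφM (ψ k)).le
  have htop : ⊤ ≤ ENNReal.ofReal M :=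
    calc ⊤ = ∫⁻ x, ENNReal.ofReal (H x) ∂μ := hH.symm
      _ ≤ liminf (fun k => ∫⁻ x, ENNReal.ofReal (F (φ (ψ k)) x) ∂μ) atTop :=
        lintegral_ofReal_le_liminf_of_tendsto_ae (fun k => (hF_int _).aemeasurable) hlim
      _ ≤ ENNReal.ofReal M := liminf_le_of_frequently_le (Frequently.of_forall hbound)
  exact ENNReal.ofReal_ne_top (top_le_iff.mp htop)

theorem TendstoInMeasure.exists_subseq_tendsto_ae_sub {G F : ℕ → X → ℝ} {g f : X → ℝ}
    (hG : TendstoInMeasure μ G atTop g) (hF : ∀ᵐ x ∂μ, Tendsto (fun n => F n x) atTop (𝓝 (f x)))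
    {φ : ℕ → ℕ} (hφ : StrictMono φ) :
    ∃ ψ : ℕ → ℕ, StrictMono ψ ∧
      ∀ᵐ x ∂μ, Tendsto (fun k => G (φ (ψ k)) x - F (φ (ψ k)) x) atTop (𝓝 (g x - f x)) := by
  obtain ⟨ψ, hψ, hGψ⟩ := (hG.comp hφ.tendsto_atTop).exists_seq_tendsto_ae
  refine ⟨ψ, hψ, ?_⟩
  filter_upwards [hGψ, hF] with x hGx hFx
  exact hGx.sub (hFx.comp (hφ.comp hψ).tendsto_atTop)

end MeasureTheory

theorem reverse_fatou_nonintegrable_case_general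
    {X : Type*} [MeasurableSpace X] {μ : Measure X}
    (fn gn : ℕ → X → ℝ) (f g : X → ℝ)
    (hfn_int : ∀ n, Integrable (fn n) μ)
    (hgn_int : ∀ n, Integrable (gn n) μ)
    (hg_int : Integrable g μ)
    (hf_minus : ∫⁻ x, ENNReal.ofReal (max (-f x) 0) ∂μ = ⊤)
    (hL1 : Tendsto (fun n => ∫ x, |gn n x - g x| ∂μ) atTop (nhds 0))
    (hle : ∀ n, ∀ᵐ x ∂μ, fn n x ≤ gn n x)
    (hptw : ∀ᵐ x ∂μ, Tendsto (fun n => fn n x) atTop (nhds (f x))) :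
    Tendsto (fun n => ∫ x, fn n x ∂μ) atTop atBot := by
  have hL1_eLpNorm := tendsto_eLpNorm_one_sub_of_tendsto_integral_abs_sub hgn_int hg_int hL1
  have hgn_meas : TendstoInMeasure μ gn atTop g :=
    tendstoInMeasure_of_tendsto_eLpNorm one_ne_zero (fun n => (hgn_int n).1) hg_int.1 hL1_eLpNorm
  have hgap_int : ∀ n, Integrable (fun x => gn n x - fn n x) μ :=
    fun n => (hgn_int n).sub (hfn_int n)
  have hgap : Tendsto (fun n => ∫ x, gn n x - fn n x ∂μ) atTop atTop :=
    tendsto_integral_atTop_of_subseq_tendsto_ae hgap_int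
      (fun n => (hle n).mono fun x hx => sub_nonneg.mpr hx)
      (lintegral_ofReal_sub_eq_top hg_int (by simpa using hf_minus))
      (fun φ hφ => hgn_meas.exists_subseq_tendsto_ae_sub hptw hφ)
  have hgn : Tendsto (fun n => ∫ x, gn n x ∂μ) atTop (𝓝 (∫ x, g x ∂μ)) :=
    tendsto_integral_of_L1' g hg_int.1 (Eventually.of_forall hgn_int) hL1_eLpNorm
  refine (hgn.add_atBot (tendsto_neg_atTop_atBot.comp hgap)).congr fun n => ?_
  rw [Function.comp_apply, integral_sub (hgn_int n) (hfn_int n)]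
  ring

/-- A version of the reverse Fatou lemma (non-integrable case):
if `gₙ → g` in `L¹(μ)` on a finite measure space, `fₙ ≤ gₙ` a.e. for each `n`,
and `fₙ → f` pointwise a.e., where `f` is measurable, its positive part
`f⁺ = max(f, 0)` is integrable, but the lower Lebesgue integral of its negative
part `f⁻ = max(−f, 0)` is infinite, then `∫ fₙ dμ → −∞`. -/
theorem reverse_fatou_nonintegrable_case
    {X : Type*} [MeasurableSpace X] {μ : Measure X} [IsFiniteMeasure μ]
    (fn gn : ℕ → X → ℝ) (f g : X → ℝ)
    (hfn_int : ∀ n, Integrable (fn n) μ)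
    (hgn_int : ∀ n, Integrable (gn n) μ)
    (hg_int : Integrable g μ)
    (hf_meas : Measurable f)
    (hf_plus : Integrable (fun x => max (f x) 0) μ)
    (hf_minus : ∫⁻ x, ENNReal.ofReal (max (-f x) 0) ∂μ = ⊤)
    (hL1 : Tendsto (fun n => ∫ x, |gn n x - g x| ∂μ) atTop (nhds 0))
    (hle : ∀ n, ∀ᵐ x ∂μ, fn n x ≤ gn n x)
    (hptw : ∀ᵐ x ∂μ, Tendsto (fun n => fn n x) atTop (nhds (f x))) :
    Tendsto (fun n => ∫ x, fn n x ∂μ) atTop atBot :=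
  reverse_fatou_nonintegrable_case_general fn gn f g hfn_int hgn_int hg_int hf_minus hL1 hle hptw
end

section
/- For all 2×2 real matrices A, B and all real numbers p, q, one has the identity ⟨p·cof A − q·cof B, A − B⟩ = (p − q)(det A − det B) + (p + q)·det(A − B), where ⟨·,·⟩ is the Frobenius inner product. (This is the key algebraic identity, combining equations (2.7)–(2.12), in the proof of Lemma 4.1 of the paper.) -/
/-- The cofactor matrix of a 2×2 real matrix (transpose of the adjugate). -/
def cof (A : Matrix (Fin 2) (Fin 2) ℝ) : Matrix (Fin 2) (Fin 2) ℝ :=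
  !![A 1 1, -(A 1 0); -(A 0 1), A 0 0]

/-- The Frobenius inner product of two 2×2 real matrices. -/
def frobInner (A B : Matrix (Fin 2) (Fin 2) ℝ) : ℝ :=
  ∑ i, ∑ j, A i j * B i j

/-! The proof expands the inner product bilinearly and uses two facts special to dimension 2:
`⟨cof A, A⟩ = 2 det A`, and the polarization `det (A - B) = det A + det B - ⟨cof A, B⟩`
of the quadratic form `det`, whose associated bilinear form `⟨cof A, B⟩` is symmetric. -/

section

variable (A B C : Matrix (Fin 2) (Fin 2) ℝ)

theorem frobInner_sub_left : frobInner (A - B) C = frobInner A C - frobInner B C := by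
  simp only [frobInner, Matrix.sub_apply, sub_mul, Finset.sum_sub_distrib]

theorem frobInner_sub_right : frobInner A (B - C) = frobInner A B - frobInner A C := by
  simp only [frobInner, Matrix.sub_apply, mul_sub, Finset.sum_sub_distrib]

theorem frobInner_smul_left (c : ℝ) : frobInner (c • A) B = c * frobInner A B := by
  simp only [frobInner, Matrix.smul_apply, smul_eq_mul, mul_assoc, Finset.mul_sum]

theorem frobInner_cof_apply :
    frobInner (cof A) B = A 1 1 * B 0 0 - A 1 0 * B 0 1 - A 0 1 * B 1 0 + A 0 0 * B 1 1 := by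
  simp only [frobInner, cof, Fin.sum_univ_two, Matrix.of_apply, Matrix.cons_val',
    Matrix.cons_val_zero, Matrix.cons_val_one, Matrix.empty_val', Matrix.cons_val_fin_one]
  ring

theorem frobInner_cof_self : frobInner (cof A) A = 2 * A.det := by
  rw [frobInner_cof_apply, Matrix.det_fin_two]
  ring

theorem frobInner_cof_comm : frobInner (cof A) B = frobInner (cof B) A := by
  rw [frobInner_cof_apply, frobInner_cof_apply]
  ring

theorem det_sub_eq_sub_frobInner_cof : (A - B).det = A.det + B.det - frobInner (cof A) B := by
  rw [frobInner_cof_apply, Matrix.det_fin_two, Matrix.det_fin_two, Matrix.det_fin_two]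
  simp only [Matrix.sub_apply]
  ring

end

/-- The key algebraic identity (combining (2.7)–(2.12) in the paper):
`⟨p·cof A − q·cof B, A − B⟩ = (p − q)(det A − det B) + (p + q)·det(A − B)`. -/
theorem frobInner_cof_identity (A B : Matrix (Fin 2) (Fin 2) ℝ) (p q : ℝ) :
    frobInner (p • cof A - q • cof B) (A - B)
      = (p - q) * (A.det - B.det) + (p + q) * (A - B).det := by
  rw [frobInner_sub_left, frobInner_smul_left, frobInner_smul_left, frobInner_sub_right,
    frobInner_sub_right, frobInner_cof_self, frobInner_cof_self, frobInner_cof_comm B A,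
    det_sub_eq_sub_frobInner_cof]
  ring
end
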